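/- arXiv:2206.11359 — 5 statements merged into one kernel-verified Lean document; each statement's English description precedes it below -/
import Mathlib

section
/- Suppose all agents have the same strict preference order o_{m₁} ≻ … ≻ o_{m_M}, and let k* = min{k : Σ_{k'=1}^{k} q_{m_{k'}} ≥ N}. Then for every fixed agent i and every object õ ∈ {o_{m₁},…,o_{m_{k*}}}, there exists a rank-minimizing allocation α with α_i = õ. -/
open Finset

/-- A strict preference over `M` objects, encoded as a bijection sending each
object to its 0-based rank position (position 0 = favorite). -/
abbrev Pref (M : ℕ) := Fin M ≃ Fin M

/-- The (1-based) rank of object `o` under preference `p`: the favorite object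
has rank 1, the second favorite rank 2, etc. -/
def rank {M : ℕ} (p : Pref M) (o : Fin M) : ℕ := (p o : ℕ) + 1

/-- `α : Fin N → Fin M` is a capacity-respecting allocation for capacities `q`. -/
def IsAlloc {N M : ℕ} (q : Fin M → ℕ) (α : Fin N → Fin M) : Prop :=
  ∀ o : Fin M, (univ.filter (fun i => α i = o)).card ≤ q o

/-- The total (summed) rank of allocation `α` at preference profile `pref`. -/
def totalRank {N M : ℕ} (pref : Fin N → Pref M) (α : Fin N → Fin M) : ℕ :=
  ∑ i, rank (pref i) (α i)

/-- The average rank of allocation `α` at preference profile `pref`. -/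
def avgRank {N M : ℕ} (pref : Fin N → Pref M) (α : Fin N → Fin M) : ℚ :=
  (totalRank pref α : ℚ) / N

/-- The rank-minimizing mechanism: the set of all capacity-respecting
allocations minimizing the average rank at the reported profile. -/
def RM {N M : ℕ} (q : Fin M → ℕ) (pref : Fin N → Pref M) : Set (Fin N → Fin M) :=
  {α | IsAlloc q α ∧ ∀ β : Fin N → Fin M, IsAlloc q β → avgRank pref α ≤ avgRank pref β}

/-- Total capacity of the `k` most-preferred objects under preference `p`. -/
def topCap {M : ℕ} (q : Fin M → ℕ) (p : Pref M) (k : ℕ) : ℕ :=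
  ∑ o ∈ univ.filter (fun o => (p o : ℕ) < k), q o

lemma topCap_mono {M : ℕ} (q : Fin M → ℕ) (p : Pref M) : Monotone (topCap q p) := by
  intro a b hab
  refine Finset.sum_le_sum_of_subset (fun o ho => ?_)
  simp only [mem_filter, mem_univ, true_and] at ho ⊢
  omega

lemma topCap_zero {M : ℕ} (q : Fin M → ℕ) (p : Pref M) : topCap q p 0 = 0 := by
  simp [topCap]

lemma topCap_top {M : ℕ} (q : Fin M → ℕ) (p : Pref M) : topCap q p M = ∑ o, q o := by
  unfold topCap
  rw [Finset.filter_true_of_mem (fun o _ => (p o).isLt)]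

lemma topCap_succ {M : ℕ} (q : Fin M → ℕ) (p : Pref M) (t : ℕ) (ht : t < M) :
    topCap q p (t + 1) = topCap q p t + q (p.symm ⟨t, ht⟩) := by
  unfold topCap
  have hins : univ.filter (fun o => (p o : ℕ) < t + 1)
      = insert (p.symm ⟨t, ht⟩) (univ.filter (fun o => (p o : ℕ) < t)) := by
    ext o
    simp only [mem_filter, mem_univ, true_and, mem_insert, Nat.lt_succ_iff_lt_or_eq]
    constructor
    · rintro (h | h)
      · exact Or.inr h
      · exact Or.inl (by rw [Equiv.eq_symm_apply]; exact Fin.ext h)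
    · rintro (h | h)
      · right; rw [Equiv.eq_symm_apply] at h
        exact (congrArg Fin.val h.symm).symm
      · exact Or.inl h
  rw [hins, Finset.sum_insert (by simp), add_comm]

lemma card_le_topCap {N M : ℕ} (q : Fin M → ℕ) (p : Pref M) (β : Fin N → Fin M)
    (hβ : IsAlloc q β) (k : ℕ) :
    (univ.filter (fun i => (p (β i) : ℕ) ≤ k)).card ≤ topCap q p (k + 1) := by
  rw [Finset.card_eq_sum_card_fiberwise (f := β)
    (t := univ.filter (fun o => (p o : ℕ) < k + 1))
    (fun i hi => by simp at hi ⊢; omega)]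
  refine Finset.sum_le_sum (fun o _ => ?_)
  calc ((univ.filter (fun i => (p (β i) : ℕ) ≤ k)).filter (fun i => β i = o)).card
      ≤ (univ.filter (fun i => β i = o)).card :=
        Finset.card_le_card (Finset.filter_subset_filter _ (Finset.filter_subset _ _))
    _ ≤ q o := hβ o

lemma totalRank_layer {N M : ℕ} (p : Pref M) (β : Fin N → Fin M) :
    totalRank (fun _ => p) β
      = N + ∑ k ∈ Finset.range M, (univ.filter (fun i => k < (p (β i) : ℕ))).card := by
  unfold totalRank rank
  rw [Finset.sum_add_distrib]
  simp only [Finset.sum_const, Finset.card_univ, Fintype.card_fin, smul_eq_mul, mul_one]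
  rw [add_comm]
  congr 1
  have h1 : ∀ i : Fin N, ((p (β i) : ℕ))
      = ∑ k ∈ Finset.range M, if k < (p (β i) : ℕ) then 1 else 0 := by
    intro i
    rw [Finset.sum_boole]
    have : (Finset.range M).filter (fun k => k < (p (β i) : ℕ))
        = Finset.range (p (β i) : ℕ) := by
      ext a; simp only [Finset.mem_filter, Finset.mem_range]
      exact ⟨fun h => h.2, fun h => ⟨h.trans (p (β i)).isLt, h⟩⟩
    simp [this]
  calc ∑ i, ((p (β i) : ℕ))
      = ∑ i, ∑ k ∈ Finset.range M, if k < (p (β i) : ℕ) then 1 else 0 :=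
        Finset.sum_congr rfl (fun i _ => h1 i)
    _ = ∑ k ∈ Finset.range M, ∑ i, if k < (p (β i) : ℕ) then 1 else 0 := Finset.sum_comm
    _ = _ := by
        refine Finset.sum_congr rfl (fun k _ => ?_)
        rw [Finset.sum_boole]; simp

lemma card_compl_layer {N M : ℕ} (p : Pref M) (β : Fin N → Fin M) (k : ℕ) :
    (univ.filter (fun i => k < (p (β i) : ℕ))).card
      = N - (univ.filter (fun i => (p (β i) : ℕ) ≤ k)).card := by
  have := Finset.card_filter_add_card_filter_not
    (s := (univ : Finset (Fin N))) (p := fun i => (p (β i) : ℕ) ≤ k)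
  simp only [Finset.card_univ, Fintype.card_fin, not_le] at this
  omega

lemma card_val_lt (N c : ℕ) :
    ((univ : Finset (Fin N)).filter (fun j : Fin N => (j : ℕ) < c)).card = min c N := by
  rcases le_or_gt N c with h | h
  · rw [Finset.filter_true_of_mem (fun (j : Fin N) _ => lt_of_lt_of_le j.isLt h)]
    simp [Nat.min_eq_right h]
  · rw [Nat.min_eq_left h.le]
    have hb : ((univ : Finset (Fin N)).filter (fun j : Fin N => (j : ℕ) < c)).card
        = (Finset.range c).card := by
      apply Finset.card_bij (fun (j : Fin N) _ => (j : ℕ))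
      · intro a ha; simp only [mem_filter, mem_univ, true_and] at ha
        simpa using ha
      · intro a _ b _ hab; exact Fin.ext hab
      · intro b hb; simp only [Finset.mem_range] at hb
        exact ⟨⟨b, hb.trans h⟩, by simp [hb], rfl⟩
    simp [hb]


/-- with identical preferences `p`, critical index `kstar`, and
every top object having capacity at least 1, every fixed agent `i` can receive
any of the top `kstar + 1` objects in some rank-minimizing allocation. -/
theorem rm_identical_prefs_any_top_object {N M : ℕ} (q : Fin M → ℕ)
    (hq : N ≤ ∑ o, q o) (p : Pref M) (kstar : Fin M)
    (hmin : topCap q p kstar < N) (hks : N ≤ topCap q p ((kstar : ℕ) + 1))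
    (hcap : ∀ o : Fin M, (p o : ℕ) ≤ (kstar : ℕ) → 1 ≤ q o) :
    ∀ (i : Fin N) (otil : Fin M), (p otil : ℕ) ≤ (kstar : ℕ) →
      ∃ α ∈ RM q (fun _ => p), α i = otil := by
  intro i otil hotil
  classical
  have hM : 0 < M := kstar.pos
  have hN : 0 < N := lt_of_le_of_lt (Nat.zero_le _) hmin
  have hNtop : N ≤ topCap q p M := by rw [topCap_top]; exact hq
  have hex : ∀ j : Fin N, ∃ k, (j : ℕ) < topCap q p (k + 1) := by
    intro j
    refine ⟨M - 1, ?_⟩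
    have he : M - 1 + 1 = M := by omega
    rw [he]
    exact lt_of_lt_of_le j.isLt hNtop
  set r : Fin N → ℕ := fun j => Nat.find (hex j) with hr
  have hrle : ∀ (j : Fin N) (k : ℕ), r j ≤ k ↔ (j : ℕ) < topCap q p (k + 1) := by
    intro j k
    rw [hr, Nat.find_le_iff]
    constructor
    · rintro ⟨m, hm, hlt⟩
      exact lt_of_lt_of_le hlt (topCap_mono q p (by omega))
    · intro h; exact ⟨k, le_refl k, h⟩
  have hrM : ∀ j : Fin N, r j < M := by
    intro j
    have he : M - 1 + 1 = M := by omega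
    have := (hrle j (M - 1)).mpr (by rw [he]; exact lt_of_lt_of_le j.isLt hNtop)
    omega
  have hriff : ∀ (j : Fin N) (t : ℕ),
      r j = t ↔ topCap q p t ≤ (j : ℕ) ∧ (j : ℕ) < topCap q p (t + 1) := by
    intro j t
    constructor
    · intro h
      refine ⟨?_, (hrle j t).mp h.le⟩
      rcases Nat.eq_zero_or_pos t with rfl | ht
      · rw [topCap_zero]; exact Nat.zero_le _
      · by_contra hc
        push_neg at hc
        have he : t - 1 + 1 = t := by omega
        have : r j ≤ t - 1 := (hrle j (t - 1)).mpr (by rwa [he])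
        omega
    · rintro ⟨h1, h2⟩
      have hle : r j ≤ t := (hrle j t).mpr h2
      rcases lt_or_eq_of_le hle with hlt | h
      · exfalso
        have hs : (j : ℕ) < topCap q p (r j + 1) := Nat.find_spec (hex j)
        have : (j : ℕ) < topCap q p t := lt_of_lt_of_le hs (topCap_mono q p (by omega))
        omega
      · exact h
  set α₀ : Fin N → Fin M := fun j => p.symm ⟨r j, hrM j⟩ with hα₀
  have hpα₀ : ∀ j, (p (α₀ j) : ℕ) = r j := by intro j; simp [hα₀]
  have halloc : IsAlloc q α₀ := by
    intro o
    set t := (p o : ℕ) with htdef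
    have hfib : univ.filter (fun j => α₀ j = o) = univ.filter (fun j => r j = t) := by
      ext j; simp only [mem_filter, mem_univ, true_and]
      constructor
      · intro h; rw [← hpα₀ j, h]
      · intro h
        have : p (α₀ j) = p o := Fin.ext (by rw [hpα₀ j, h])
        exact p.injective this
    rw [hfib]
    have hsub : ∀ j ∈ univ.filter (fun j => r j = t),
        (j : ℕ) ∈ Finset.Ico (topCap q p t) (topCap q p (t + 1)) := by
      intro j hj
      simp only [mem_filter, mem_univ, true_and] at hj
      rw [Finset.mem_Ico]
      exact (hriff j t).mp hj
    calc (univ.filter (fun j => r j = t)).card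
        ≤ (Finset.Ico (topCap q p t) (topCap q p (t + 1))).card :=
          Finset.card_le_card_of_injOn (fun j => (j : ℕ)) hsub
            (fun a _ b _ hab => Fin.ext hab)
      _ = topCap q p (t + 1) - topCap q p t := by rw [Nat.card_Ico]
      _ ≤ q o := by
          have he : (⟨t, (p o).isLt⟩ : Fin M) = p o := rfl
          rw [topCap_succ q p t (p o).isLt, he, Equiv.symm_apply_apply]
          omega
  have hcard₀ : ∀ k, (univ.filter (fun j => (p (α₀ j) : ℕ) ≤ k)).card
      = min (topCap q p (k + 1)) N := by
    intro k
    have heq : univ.filter (fun j => (p (α₀ j) : ℕ) ≤ k)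
        = univ.filter (fun j : Fin N => (j : ℕ) < topCap q p (k + 1)) := by
      ext j
      simp only [mem_filter, mem_univ, true_and, hpα₀]
      exact hrle j k
    rw [heq, card_val_lt]
  have hopt : ∀ β : Fin N → Fin M, IsAlloc q β →
      totalRank (fun _ => p) α₀ ≤ totalRank (fun _ => p) β := by
    intro β hβ
    rw [totalRank_layer, totalRank_layer]
    apply Nat.add_le_add_left
    apply Finset.sum_le_sum
    intro k _
    rw [card_compl_layer, card_compl_layer, hcard₀ k]
    have h1 := card_le_topCap q p β hβ k
    have h2 : (univ.filter (fun i => (p (β i) : ℕ) ≤ k)).card ≤ N :=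
      le_trans (Finset.card_filter_le _ _) (by simp)
    omega
  set t := (p otil : ℕ) with htdef
  have httop : topCap q p t < N := lt_of_le_of_lt (topCap_mono q p hotil) hmin
  set j₀ : Fin N := ⟨topCap q p t, httop⟩ with hj₀
  have hrj₀ : r j₀ = t := by
    rw [hriff]
    refine ⟨le_refl _, ?_⟩
    have he : (⟨t, (p otil).isLt⟩ : Fin M) = p otil := rfl
    rw [topCap_succ q p t (p otil).isLt, he, Equiv.symm_apply_apply]
    have := hcap otil hotil
    simp only [hj₀]
    omega
  have hα₀j₀ : α₀ j₀ = otil := by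
    have : p (α₀ j₀) = p otil := Fin.ext (by rw [hpα₀, hrj₀])
    exact p.injective this
  set α : Fin N → Fin M := fun kk => α₀ (Equiv.swap i j₀ kk) with hα
  have hαi : α i = otil := by rw [hα]; simp [Equiv.swap_apply_left, hα₀j₀]
  have hallocα : IsAlloc q α := by
    intro o
    have himg : (univ.filter (fun kk => α kk = o)).image (Equiv.swap i j₀)
        = univ.filter (fun kk => α₀ kk = o) := by
      ext k'
      simp only [Finset.mem_image, mem_filter, mem_univ, true_and, hα]
      constructor
      · rintro ⟨kk, hkk, rfl⟩; exact hkk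
      · intro h
        exact ⟨Equiv.swap i j₀ k', by rwa [Equiv.swap_apply_self],
          Equiv.swap_apply_self _ _ _⟩
    have hci := Finset.card_image_of_injective
      (univ.filter (fun kk => α kk = o)) (Equiv.swap i j₀).injective
    rw [himg] at hci
    rw [← hci]
    exact halloc o
  have htr : totalRank (fun _ => p) α = totalRank (fun _ => p) α₀ := by
    unfold totalRank
    exact Equiv.sum_comp (Equiv.swap i j₀) (fun kk => rank p (α₀ kk))
  refine ⟨α, ⟨hallocα, ?_⟩, hαi⟩
  intro β hβ
  unfold avgRank
  rw [htr]
  gcongr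
  exact_mod_cast hopt β hβ
end

section
/- If an allocation α leaves some object o unfilled to capacity and assigns some agent j to an object o' with o ≻_j o', then the allocation α' obtained by reassigning j to o (and keeping all other assignments) is a capacity-respecting allocation with strictly lower average rank than α. Consequently, any rank-minimizing allocation assigns every agent to an object o such that every object strictly preferred to o by that agent is filled to capacity. -/
open Finset

lemma key {N M : ℕ} (q : Fin M → ℕ) (pref : Fin N → Pref M) (α : Fin N → Fin M)
    (hα : IsAlloc q α) (o : Fin M)
    (ho : (univ.filter (fun i => α i = o)).card < q o)
    (j : Fin N) (hj : rank (pref j) o < rank (pref j) (α j)) :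
    IsAlloc q (Function.update α j o) ∧
      avgRank pref (Function.update α j o) < avgRank pref α := by
  have hne : α j ≠ o := fun h => by simp [h] at hj
  constructor
  · intro o''
    by_cases h : o'' = o
    · rw [h]
      have hset : (univ.filter (fun i => Function.update α j o i = o))
          = insert j (univ.filter (fun i => α i = o)) := by
        ext i
        by_cases hij : i = j <;> simp [Function.update, hij]
      rw [hset, card_insert_of_notMem (by simp [hne])]
      omega
    · have hsub : (univ.filter (fun i => Function.update α j o i = o''))
          ⊆ (univ.filter (fun i => α i = o'')) := by
        intro i hi
        simp only [mem_filter, mem_univ, true_and] at hi ⊢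
        by_cases hij : i = j
        · subst hij; simp [Function.update] at hi; exact absurd hi (Ne.symm h)
        · simpa [Function.update, hij] using hi
      exact le_trans (card_le_card hsub) (hα o'')
  · have hN : (0:ℚ) < N := by
      have : 0 < N := Fin.pos j
      exact_mod_cast this
    rw [avgRank, avgRank, div_lt_div_iff_of_pos_right hN]
    have : totalRank pref (Function.update α j o) < totalRank pref α := by
      refine Finset.sum_lt_sum (fun i _ => ?_) ⟨j, mem_univ j, by simpa using hj⟩
      by_cases hij : i = j
      · subst hij; simpa using hj.le
      · simp [Function.update, hij]
    exact_mod_cast this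

/-- if object `o` is not filled to capacity and agent `j` is
assigned an object she strictly disprefers to `o`, then reassigning `j` to `o`
yields a capacity-respecting allocation with strictly lower average rank.
Consequently, in any rank-minimizing allocation, every object strictly
preferred by an agent to her assignment is filled to capacity. -/
theorem reassigning_improves_and_rm_fills_better_objects {N M : ℕ}
    (q : Fin M → ℕ) (pref : Fin N → Pref M) (α : Fin N → Fin M)
    (hα : IsAlloc q α) (o : Fin M)
    (ho : (univ.filter (fun i => α i = o)).card < q o)
    (j : Fin N) (hj : rank (pref j) o < rank (pref j) (α j)) :
    (IsAlloc q (Function.update α j o) ∧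
      avgRank pref (Function.update α j o) < avgRank pref α) ∧
    (∀ β ∈ RM q pref, ∀ (i : Fin N) (o' : Fin M),
      rank (pref i) o' < rank (pref i) (β i) →
        (univ.filter (fun i' => β i' = o')).card = q o') := by
  refine ⟨key q pref α hα o ho j hj, ?_⟩
  intro β hβ i o' hlt
  obtain ⟨hβa, hmin⟩ := hβ
  by_contra h
  have hlt' : (univ.filter (fun i' => β i' = o')).card < q o' :=
    lt_of_le_of_ne (hβa o') h
  obtain ⟨halloc, himp⟩ := key q pref β hβa o' hlt' i hlt
  exact absurd (hmin _ halloc) (not_le.mpr himp)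
end

section
/- Fix agent i with true preferences o_{m₁} ≻_i … ≻_i o_{m_M} and let k* = min{k : Σ_{k'=1}^{k} q_{m_{k'}} ≥ N}. Then for every preference profile ≻_{−i} of the other agents and every rank-minimizing allocation α at (≻_i, ≻_{−i}), the rank (under ≻_i) of agent i's assigned object is at most k*. That is, when reporting truthfully, agent i's worst-case rank across all counterpart profiles and all rank-minimizing allocations is at most k*. -/
open Finset

/-- fixing agent `i`'s true preference `p` with critical index
`kstar`, for every counterpart profile and every rank-minimizing allocation at
the truthful report, agent `i`'s true rank is at most `kstar + 1`. -/
theorem truthful_worst_case_at_most_kstar {N M : ℕ} (q : Fin M → ℕ)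
    (hq : N ≤ ∑ o, q o) (i : Fin N) (p : Pref M) (kstar : Fin M)
    (hmin : topCap q p kstar < N) (hks : N ≤ topCap q p ((kstar : ℕ) + 1))
    (pref : Fin N → Pref M) (hi : pref i = p) :
    ∀ α ∈ RM q pref, rank p (α i) ≤ (kstar : ℕ) + 1 := by
  intro α hα
  by_contra hbad
  push_neg at hbad
  have hrk : (kstar : ℕ) + 1 ≤ (p (α i) : ℕ) := by
    unfold rank at hbad; omega
  set S : Finset (Fin M) := univ.filter (fun o => (p o : ℕ) < (kstar : ℕ) + 1) with hS
  -- the number of agents assigned into S is < N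
  have hiS : i ∉ univ.filter (fun j => α j ∈ S) := by
    simp only [hS, mem_filter, mem_univ, true_and]
    omega
  have hcard : (univ.filter (fun j => α j ∈ S)).card < N := by
    have h1 : (univ.filter (fun j => α j ∈ S)) ⊂ univ :=
      (filter_subset _ _).ssubset_of_ne (by
        intro h; rw [h] at hiS; exact hiS (mem_univ i))
    simpa using Finset.card_lt_card h1
  have hfib : (univ.filter (fun j => α j ∈ S)).card
      = ∑ o ∈ S, ((univ.filter (fun j => α j ∈ S)).filter (fun j => α j = o)).card := by
    apply Finset.card_eq_sum_card_fiberwise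
    intro x hx; exact (mem_filter.mp hx).2
  have hfib2 : ∀ o ∈ S, ((univ.filter (fun j => α j ∈ S)).filter (fun j => α j = o)).card
      = (univ.filter (fun j => α j = o)).card := by
    intro o ho
    congr 1
    ext j
    simp only [mem_filter, mem_univ, true_and]
    constructor
    · rintro ⟨_, h⟩; exact h
    · rintro h; exact ⟨h ▸ ho, h⟩
  have hsum : ∑ o ∈ S, (univ.filter (fun j => α j = o)).card < ∑ o ∈ S, q o := by
    calc ∑ o ∈ S, (univ.filter (fun j => α j = o)).card
        = (univ.filter (fun j => α j ∈ S)).card := by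
          rw [hfib]; exact Finset.sum_congr rfl fun o ho => (hfib2 o ho).symm
      _ < N := hcard
      _ ≤ ∑ o ∈ S, q o := hks
  -- find an object in S with slack
  have hex : ∃ o ∈ S, (univ.filter (fun j => α j = o)).card < q o := by
    by_contra h
    push_neg at h
    exact absurd (Finset.sum_le_sum h) (not_le.mpr hsum)
  obtain ⟨o, hoS, hslack⟩ := hex
  set β := Function.update α i o with hβ
  have hβalloc : IsAlloc q β := by
    intro o'
    by_cases ho' : o' = o
    · subst ho'
      have hsub : (univ.filter (fun j => β j = o')).card
          ≤ (univ.filter (fun j => α j = o')).card + 1 := by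
        have : (univ.filter (fun j => β j = o')) ⊆ insert i (univ.filter (fun j => α j = o')) := by
          intro j hj
          rcases eq_or_ne j i with rfl | hji
          · exact mem_insert_self _ _
          · apply mem_insert_of_mem
            simp only [mem_filter, mem_univ, true_and] at hj ⊢
            rwa [hβ, Function.update_of_ne hji] at hj
        exact le_trans (Finset.card_le_card this) (Finset.card_insert_le _ _)
      omega
    · have hsub : (univ.filter (fun j => β j = o')) ⊆ (univ.filter (fun j => α j = o')) := by
        intro j hj
        simp only [mem_filter, mem_univ, true_and] at hj ⊢
        rcases eq_or_ne j i with rfl | hji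
        · rw [hβ, Function.update_self] at hj; exact absurd hj.symm ho'
        · rwa [hβ, Function.update_of_ne hji] at hj
      exact le_trans (Finset.card_le_card hsub) (hα.1 o')
  have htot : totalRank pref β < totalRank pref α := by
    apply Finset.sum_lt_sum
    · intro j _
      rcases eq_or_ne j i with rfl | hji
      · rw [hβ, Function.update_self, hi]
        simp only [hS, mem_filter, mem_univ, true_and] at hoS
        unfold rank; omega
      · rw [hβ, Function.update_of_ne hji]
    · refine ⟨i, mem_univ i, ?_⟩
      rw [hβ, Function.update_self, hi]
      simp only [hS, mem_filter, mem_univ, true_and] at hoS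
      unfold rank; omega
  have hN : (0 : ℚ) < N := by exact_mod_cast i.pos
  have havg : avgRank pref β < avgRank pref α := by
    unfold avgRank
    gcongr
  exact absurd (hα.2 β hβalloc) (not_le.mpr havg)
end

section
/- Fix agent i with true preferences o_{m₁} ≻_i … ≻_i o_{m_M}, k* = min{k : Σ_{k'=1}^{k} q_{m_{k'}} ≥ N}, and any misreport ≻_i′ ≠ ≻_i with index order o_{r₁}, o_{r₂},…, o_{r_M} and k** = min{k : Σ_{k'=1}^{k} q_{r_{k'}} ≥ N}. If the set O'' = {o_{r₁},…,o_{r_{k**}}} equals {o_{m₁},…,o_{m_{k*}}}, then when all other agents report ≻_i′, there is a rank-minimizing allocation giving agent i an object of true rank k* (namely o_{m_{k*}}); hence the worst-case true rank under the misreport is at least k*. -/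
open Finset

/-- Worst-case (true) rank of agent `i` (with true preference `truth`) when she
reports `report`, over all counterpart profiles and all allocations returned by
the rank-minimizing mechanism. -/
noncomputable def worstCase {N M : ℕ} (q : Fin M → ℕ) (i : Fin N)
    (truth report : Pref M) : ℕ :=
  sSup {r | ∃ pref : Fin N → Pref M, pref i = report ∧
    ∃ α ∈ RM q pref, r = rank truth (α i)}

/-- Best-case (true) rank of agent `i` (with true preference `truth`) when she
reports `report`, over all counterpart profiles and all allocations returned by
the rank-minimizing mechanism. -/
noncomputable def bestCase {N M : ℕ} (q : Fin M → ℕ) (i : Fin N)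
    (truth report : Pref M) : ℕ :=
  sInf {r | ∃ pref : Fin N → Pref M, pref i = report ∧
    ∃ α ∈ RM q pref, r = rank truth (α i)}


section AuxRM

lemma tc_zero {M : ℕ} (q : Fin M → ℕ) (p' : Pref M) : topCap q p' 0 = 0 := by
  simp [topCap]

lemma tc_mono {M : ℕ} (q : Fin M → ℕ) (p' : Pref M) {k k' : ℕ} (h : k ≤ k') :
    topCap q p' k ≤ topCap q p' k' := by
  apply Finset.sum_le_sum_of_subset
  intro o ho
  simp only [mem_filter, mem_univ, true_and] at ho ⊢
  omega

lemma tc_succ {M : ℕ} (q : Fin M → ℕ) (p' : Pref M) (j : Fin M) :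
    topCap q p' ((j:ℕ)+1) = topCap q p' (j:ℕ) + q (p'.symm j) := by
  unfold topCap
  have hfil : (univ.filter (fun o : Fin M => (p' o : ℕ) < (j:ℕ) + 1)) =
      insert (p'.symm j) (univ.filter (fun o => (p' o : ℕ) < (j:ℕ))) := by
    ext o
    simp only [mem_filter, mem_univ, true_and, mem_insert, Nat.lt_succ_iff]
    constructor
    · intro h
      rcases eq_or_lt_of_le h with h | h
      · exact Or.inl (by rw [Equiv.eq_symm_apply]; exact Fin.ext h)
      · exact Or.inr h
    · rintro (h | h)
      · subst h; simp
      · exact le_of_lt h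
  rw [hfil, Finset.sum_insert (by simp)]
  ring

lemma card_filter_Ico' (N : ℕ) (c d : ℕ) :
    ((univ : Finset (Fin N)).filter (fun a : Fin N => c ≤ (a : ℕ) ∧ (a : ℕ) < d)).card
      = min d N - c := by
  rw [← Nat.card_Ico c (min d N)]
  apply Finset.card_bij (fun (a : Fin N) (_ : a ∈ univ.filter (fun x : Fin N => c ≤ (x:ℕ) ∧ (x:ℕ) < d)) => (a : ℕ))
  · intro a ha
    simp only [mem_filter, mem_univ, true_and] at ha
    simp only [Finset.mem_Ico, lt_min_iff]
    exact ⟨ha.1, ha.2, a.isLt⟩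
  · intro a _ b _ h; exact Fin.ext h
  · intro b hb
    simp only [Finset.mem_Ico, lt_min_iff] at hb
    exact ⟨⟨b, hb.2.2⟩, by simp [hb.1, hb.2.1], rfl⟩

lemma sum_comp_fiber {N M : ℕ} (α : Fin N → Fin M) (h : Fin M → ℕ) :
    ∑ a, h (α a) = ∑ o, ((univ : Finset (Fin N)).filter (fun a => α a = o)).card * h o := by
  rw [← Finset.sum_fiberwise univ α (fun a => h (α a))]
  apply Finset.sum_congr rfl
  intro o _
  calc ∑ a ∈ univ.filter (fun a => α a = o), h (α a)
      = ∑ _a ∈ univ.filter (fun a => α a = o), h o := by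
        apply Finset.sum_congr rfl
        intro a ha
        rw [(mem_filter.mp ha).2]
    _ = _ := by rw [Finset.sum_const, smul_eq_mul]

end AuxRM

/-- Case 1: if the minimal capacity-reaching top set of the
misreport `p'` coincides with the true top set, then when everyone reports
`p'` some rank-minimizing allocation gives agent `i` the critical object
`p.symm kstar` of true rank `kstar + 1`; hence the worst-case true rank under
the misreport is at least `kstar + 1`. -/
theorem misreport_case1_worst_at_least_kstar {N M : ℕ} (q : Fin M → ℕ)
    (hq : N ≤ ∑ o, q o) (i : Fin N) (p p' : Pref M) (hne : p' ≠ p)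
    (kstar kstar2 : Fin M)
    (hmin : topCap q p kstar < N) (hks : N ≤ topCap q p ((kstar : ℕ) + 1))
    (hmin' : topCap q p' kstar2 < N) (hks' : N ≤ topCap q p' ((kstar2 : ℕ) + 1))
    (hcap : ∀ o : Fin M, (p' o : ℕ) ≤ (kstar2 : ℕ) → 1 ≤ q o)
    (hset : {o : Fin M | (p' o : ℕ) ≤ (kstar2 : ℕ)} =
            {o : Fin M | (p o : ℕ) ≤ (kstar : ℕ)}) :
    (∃ α ∈ RM q (fun _ => p'), α i = p.symm kstar) ∧
    (kstar : ℕ) + 1 ≤ worstCase q i p p' := by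
  have hN : 0 < N := i.pos
  set K : ℕ := (kstar2 : ℕ) with hK
  set ostar : Fin M := p.symm kstar with hostar
  have hostar_top : (p' ostar : ℕ) ≤ K := by
    have h1 : ostar ∈ {o : Fin M | (p o : ℕ) ≤ (kstar : ℕ)} := by
      simp [hostar]
    rw [← hset] at h1
    exact h1
  -- the greedy assignment
  set J : Fin N → ℕ := fun a => Nat.findGreatest (fun j => topCap q p' j ≤ (a : ℕ)) K with hJ
  have hJle : ∀ a, J a ≤ K := fun a => Nat.findGreatest_le K
  have hJspec : ∀ a, topCap q p' (J a) ≤ (a : ℕ) := by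
    intro a
    simp only [hJ]
    exact Nat.findGreatest_spec (P := fun j => topCap q p' j ≤ (a : ℕ)) (m := 0)
      (Nat.zero_le K) (by simp [tc_zero])
  have hJsucc : ∀ a : Fin N, (a : ℕ) < topCap q p' (J a + 1) := by
    intro a
    rcases eq_or_lt_of_le (hJle a) with h | h
    · rw [h]
      exact lt_of_lt_of_le a.isLt hks'
    · by_contra hc
      push_neg at hc
      exact (Nat.findGreatest_is_greatest (Nat.lt_succ_self _) h) hc
  have hJM : ∀ a, J a < M := fun a => lt_of_le_of_lt (hJle a) kstar2.isLt
  set β₀ : Fin N → Fin M := fun a => p'.symm ⟨J a, hJM a⟩ with hβ₀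
  have hβ₀iff : ∀ (a : Fin N) (o : Fin M), β₀ a = o ↔ (p' o : ℕ) = J a := by
    intro a o
    rw [hβ₀]
    simp only
    rw [Equiv.symm_apply_eq, Fin.ext_iff]
    exact eq_comm
  have hfiber : ∀ o : Fin M, (p' o : ℕ) ≤ K →
      ((univ : Finset (Fin N)).filter (fun a => β₀ a = o)).card
        = min (topCap q p' ((p' o : ℕ) + 1)) N - topCap q p' (p' o : ℕ) := by
    intro o ho
    rw [← card_filter_Ico' N (topCap q p' (p' o : ℕ)) (topCap q p' ((p' o : ℕ) + 1))]
    congr 1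
    apply Finset.filter_congr
    intro a _
    rw [hβ₀iff]
    constructor
    · intro h
      exact ⟨by rw [h]; exact hJspec a, by rw [h]; exact hJsucc a⟩
    · rintro ⟨h1, h2⟩
      have hge : (p' o : ℕ) ≤ J a := Nat.le_findGreatest ho h1
      have hle : J a ≤ (p' o : ℕ) := by
        by_contra hc
        push_neg at hc
        exact absurd (le_trans (tc_mono q p' hc) (hJspec a)) (not_le.mpr h2)
      omega
  have htc : ∀ o : Fin M, topCap q p' ((p' o : ℕ) + 1) = topCap q p' (p' o : ℕ) + q o := by
    intro o
    have h := tc_succ q p' (p' o)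
    simpa using h
  have hcount_le : ∀ o : Fin M, ((univ : Finset (Fin N)).filter (fun a => β₀ a = o)).card ≤ q o := by
    intro o
    by_cases ho : (p' o : ℕ) ≤ K
    · rw [hfiber o ho, htc o]
      have h1 : min (topCap q p' (p' o : ℕ) + q o) N ≤ topCap q p' (p' o : ℕ) + q o :=
        min_le_left _ _
      omega
    · have hemp : ((univ : Finset (Fin N)).filter (fun a => β₀ a = o)) = ∅ := by
        apply Finset.filter_eq_empty_iff.mpr
        intro a _ hao
        exact ho (le_of_eq_of_le ((hβ₀iff a o).mp hao) (hJle a))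
      rw [hemp]
      simp
  have hcount_eq : ∀ o : Fin M, (p' o : ℕ) < K →
      ((univ : Finset (Fin N)).filter (fun a => β₀ a = o)).card = q o := by
    intro o ho
    rw [hfiber o (le_of_lt ho), htc o]
    have h1 : topCap q p' ((p' o : ℕ)) + q o ≤ topCap q p' K := by
      rw [← htc o]
      exact tc_mono q p' ho
    have h2 : topCap q p' (p' o : ℕ) + q o < N := lt_of_le_of_lt h1 hmin'
    rw [min_eq_left (le_of_lt h2)]
    omega
  have hcount_star : 0 < ((univ : Finset (Fin N)).filter (fun a => β₀ a = ostar)).card := by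
    rcases lt_or_eq_of_le hostar_top with h | h
    · rw [hcount_eq ostar h]
      exact hcap ostar hostar_top
    · rw [hfiber ostar hostar_top, h, min_eq_right hks']
      omega
  obtain ⟨a₀, ha₀⟩ := Finset.card_pos.mp hcount_star
  have ha₀' : β₀ a₀ = ostar := (Finset.mem_filter.mp ha₀).2
  set σ : Equiv.Perm (Fin N) := Equiv.swap i a₀ with hσ
  set β : Fin N → Fin M := fun a => β₀ (σ a) with hβ
  have hβi : β i = ostar := by
    rw [hβ]
    simp only [hσ, Equiv.swap_apply_left]
    exact ha₀'
  have hfibβ : ∀ o, ((univ : Finset (Fin N)).filter (fun a => β a = o)).card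
      = ((univ : Finset (Fin N)).filter (fun a => β₀ a = o)).card := by
    intro o
    have hmap : ((univ : Finset (Fin N)).filter (fun a => β a = o))
        = ((univ : Finset (Fin N)).filter (fun a => β₀ a = o)).map σ.symm.toEmbedding := by
      ext a
      simp only [mem_filter, mem_univ, true_and, Finset.mem_map_equiv, Equiv.symm_symm, hβ]
    rw [hmap, Finset.card_map]
  have hAllocβ : IsAlloc q β := fun o => (hfibβ o) ▸ hcount_le o
  set g : Fin M → ℕ := fun o => K - (p' o : ℕ) with hg
  set Gtot : ℕ := ∑ o, q o * g o with hGtot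
  have key : ∀ γ : Fin N → Fin M, IsAlloc q γ →
      N * K ≤ (∑ a, (p' (γ a) : ℕ)) + Gtot := by
    intro γ hγ
    have h1 : N * K ≤ ∑ a, ((p' (γ a) : ℕ) + g (γ a)) := by
      calc N * K = ∑ _a : Fin N, K := by simp [Finset.sum_const, mul_comm]
        _ ≤ _ := Finset.sum_le_sum (fun a _ => by simp only [hg]; omega)
    have h2 : ∑ a, g (γ a) ≤ Gtot := by
      rw [sum_comp_fiber γ g, hGtot]
      exact Finset.sum_le_sum (fun o _ => Nat.mul_le_mul_right _ (hγ o))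
    have h3 : ∑ a, ((p' (γ a) : ℕ) + g (γ a))
        = (∑ a, (p' (γ a) : ℕ)) + ∑ a, g (γ a) := Finset.sum_add_distrib
    omega
  have hβtop : ∀ a, (p' (β a) : ℕ) ≤ K := by
    intro a
    have h1 : (p' (β a) : ℕ) = J (σ a) := (hβ₀iff (σ a) (β₀ (σ a))).mp rfl
    rw [h1]
    exact hJle _
  have hβeq : (∑ a, (p' (β a) : ℕ)) + Gtot = N * K := by
    have e1 : ∑ a, ((p' (β a) : ℕ) + g (β a)) = N * K := by
      calc ∑ a, ((p' (β a) : ℕ) + g (β a)) = ∑ _a : Fin N, K := by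
            apply Finset.sum_congr rfl
            intro a _
            have h1 := hβtop a
            simp only [hg]
            omega
        _ = N * K := by simp [mul_comm]
    have e2 : ∑ a, g (β a) = Gtot := by
      rw [sum_comp_fiber β g, hGtot]
      apply Finset.sum_congr rfl
      intro o _
      rw [hfibβ o]
      by_cases ho : (p' o : ℕ) < K
      · rw [hcount_eq o ho]
      · have hgo : g o = 0 := by simp only [hg]; omega
        rw [hgo, mul_zero, mul_zero]
    rw [← e2, ← Finset.sum_add_distrib, e1]
  have hopt : ∀ γ : Fin N → Fin M, IsAlloc q γ →
      totalRank (fun _ => p') β ≤ totalRank (fun _ => p') γ := by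
    intro γ hγ
    have h1 := key γ hγ
    have h2 : (∑ a, (p' (β a) : ℕ)) ≤ ∑ a, (p' (γ a) : ℕ) := by omega
    simp only [totalRank, rank]
    rw [Finset.sum_add_distrib, Finset.sum_add_distrib]
    omega
  have hRM : β ∈ RM q (fun _ => p') := by
    refine ⟨hAllocβ, ?_⟩
    intro γ hγ
    unfold avgRank
    have hNQ : (0:ℚ) < (N : ℚ) := by exact_mod_cast hN
    apply div_le_div_of_nonneg_right ?_ hNQ.le
    exact_mod_cast hopt γ hγ
  constructor
  · exact ⟨β, hRM, hβi⟩
  · apply le_csSup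
    · refine ⟨M, ?_⟩
      rintro r ⟨pref, hpref, α, hα, rfl⟩
      exact (p (α i)).isLt
    · refine ⟨fun _ => p', rfl, β, hRM, ?_⟩
      rw [hβi, hostar]
      simp [rank]
end

section
/- For every agent i with true preferences ≻_i and every misreport ≻_i′ ≠ ≻_i: max over ≻_{−i} of the maximum true rank of i's assignment over allocations in ψ^RM(≻_i, ≻_{−i}) is at most max over ≻_{−i} of the maximum true rank over allocations in ψ^RM(≻_i′, ≻_{−i}). That is, truthful reporting weakly optimizes the worst-case outcome in the rank-minimizing mechanism (part (i) of non-obvious manipulability). -/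
open Finset

/- ---------- Auxiliary lemmas ---------- -/

lemma rank_le_M {M : ℕ} (p : Pref M) (o : Fin M) : rank p o ≤ M := (p o).isLt

/-- An allocation exists whenever total capacity is at least the number of agents. -/
lemma exists_alloc {N M : ℕ} (q : Fin M → ℕ) (hq : N ≤ ∑ o, q o) :
    ∃ α : Fin N → Fin M, IsAlloc q α := by
  classical
  have hcard : Fintype.card (Fin N) ≤ Fintype.card (Σ o : Fin M, Fin (q o)) := by
    simpa using hq
  obtain ⟨f⟩ := Function.Embedding.nonempty_of_card_le hcard
  refine ⟨fun i => (f i).1, fun o => ?_⟩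
  have hset : ((univ : Finset (Σ o' : Fin M, Fin (q o'))).filter (fun s => s.1 = o))
      = (univ : Finset (Fin (q o))).map ⟨fun x => ⟨o, x⟩, fun a b h => by simpa using h⟩ := by
    ext ⟨o', x⟩
    simp only [mem_filter, mem_univ, true_and, mem_map, Function.Embedding.coeFn_mk]
    constructor
    · rintro rfl; exact ⟨x, rfl⟩
    · rintro ⟨y, h⟩; cases h; rfl
  have hle : (univ.filter fun i : Fin N => (f i).1 = o).card
      ≤ ((univ : Finset (Σ o' : Fin M, Fin (q o'))).filter (fun s => s.1 = o)).card := by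
    apply Finset.card_le_card_of_injOn f
    · intro i hi
      simp only [coe_filter, mem_filter, mem_univ, true_and, Set.mem_setOf_eq] at hi ⊢
      exact hi
    · exact f.injective.injOn
  calc (univ.filter fun i : Fin N => (f i).1 = o).card
      ≤ _ := hle
    _ = q o := by rw [hset, Finset.card_map, Finset.card_univ, Fintype.card_fin]

/-- The rank-minimizing set is nonempty. -/
lemma exists_RM {N M : ℕ} (q : Fin M → ℕ) (hq : N ≤ ∑ o, q o)
    (pref : Fin N → Pref M) : ∃ α, α ∈ RM q pref := by
  classical
  obtain ⟨α0, hα0⟩ := exists_alloc q hq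
  obtain ⟨α, hmem, hmin⟩ := Finset.exists_min_image
    ((univ : Finset (Fin N → Fin M)).filter (fun α => IsAlloc q α)) (totalRank pref)
    ⟨α0, by simpa using hα0⟩
  refine ⟨α, by simpa using (mem_filter.mp hmem).2, fun β hβ => ?_⟩
  have h := hmin β (by simp [hβ])
  unfold avgRank
  gcongr


/-- Truth-telling upper bound: if the top `k` objects (under `p`) have total
capacity at least `N`, then any rank-minimizing allocation gives an agent
reporting `p` one of her top `k` objects. -/
lemma rank_mem_RM_le {N M : ℕ} (q : Fin M → ℕ) (i : Fin N) (p : Pref M) (k : ℕ)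
    (hk : N ≤ topCap q p k) (pref : Fin N → Pref M) (hpi : pref i = p)
    (α : Fin N → Fin M) (hα : α ∈ RM q pref) : rank p (α i) ≤ k := by
  classical
  by_contra hgt
  push_neg at hgt
  have hpos : k ≤ (p (α i) : ℕ) := by unfold rank at hgt; omega
  have hN : 0 < N := i.pos
  set T := univ.filter (fun o : Fin M => (p o : ℕ) < k) with hT
  have hfree : ∃ o ∈ T, (univ.filter fun j => α j = o).card < q o := by
    by_contra hall
    push_neg at hall
    have h1 : topCap q p k ≤ ∑ o ∈ T, (univ.filter fun j => α j = o).card :=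
      Finset.sum_le_sum (fun o ho => hall o ho)
    set S := (univ : Finset (Fin N)).filter (fun j => α j ∈ T) with hS
    have h2 : S.card = ∑ o ∈ T, (S.filter fun j => α j = o).card :=
      Finset.card_eq_sum_card_fiberwise (fun j hj => (mem_filter.mp hj).2)
    have h3 : ∀ o ∈ T, (S.filter fun j => α j = o) = (univ.filter fun j => α j = o) := by
      intro o ho
      ext j
      simp only [hS, mem_filter, mem_univ, true_and]
      constructor
      · rintro ⟨_, h⟩; exact h
      · rintro h; exact ⟨h ▸ ho, h⟩
    have h4 : i ∉ S := by
      simp only [hS, hT, mem_filter, mem_univ, true_and]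
      omega
    have h5 : S ⊆ univ.erase i := by
      intro j hj
      exact mem_erase.mpr ⟨fun hji => h4 (hji ▸ hj), mem_univ j⟩
    have h6 : S.card ≤ N - 1 := by
      have := Finset.card_le_card h5
      rwa [Finset.card_erase_of_mem (mem_univ i), Finset.card_univ, Fintype.card_fin] at this
    have h7 : ∑ o ∈ T, (S.filter fun j => α j = o).card
        = ∑ o ∈ T, (univ.filter fun j => α j = o).card :=
      Finset.sum_congr rfl (fun o ho => by rw [h3 o ho])
    omega
  obtain ⟨o, hoT, hofree⟩ := hfree
  set β := Function.update α i o with hβ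
  have hβalloc : IsAlloc q β := by
    intro o'
    by_cases ho' : o' = o
    · subst ho'
      have hsub : (univ.filter fun j => β j = o') ⊆ insert i (univ.filter fun j => α j = o') := by
        intro j hj
        simp only [mem_filter, mem_univ, true_and] at hj
        by_cases hji : j = i
        · subst hji; exact mem_insert_self _ _
        · refine mem_insert_of_mem ?_
          simp only [mem_filter, mem_univ, true_and]
          rwa [hβ, Function.update_of_ne hji] at hj
      calc (univ.filter fun j => β j = o').card
          ≤ (insert i (univ.filter fun j => α j = o')).card := Finset.card_le_card hsub
        _ ≤ (univ.filter fun j => α j = o').card + 1 := Finset.card_insert_le _ _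
        _ ≤ q o' := hofree
    · have hsub : (univ.filter fun j => β j = o') ⊆ (univ.filter fun j => α j = o') := by
        intro j hj
        simp only [mem_filter, mem_univ, true_and] at hj ⊢
        by_cases hji : j = i
        · subst hji
          rw [hβ, Function.update_self] at hj
          exact absurd hj.symm ho'
        · rwa [hβ, Function.update_of_ne hji] at hj
      exact le_trans (Finset.card_le_card hsub) (hα.1 o')
  have hlt : totalRank pref β < totalRank pref α := by
    unfold totalRank
    rw [← Finset.add_sum_erase _ (fun j => rank (pref j) (β j)) (mem_univ i),
        ← Finset.add_sum_erase _ (fun j => rank (pref j) (α j)) (mem_univ i)]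
    apply Nat.add_lt_add_of_lt_of_le
    · rw [hβ, Function.update_self, hpi]
      have hok : (p o : ℕ) < k := by
        simpa [hT] using hoT
      unfold rank
      omega
    · apply le_of_eq
      apply Finset.sum_congr rfl
      intro j hj
      rw [hβ, Function.update_of_ne (Finset.ne_of_mem_erase hj)]
  have hmin := hα.2 β hβalloc
  unfold avgRank at hmin
  have hNQ : (0:ℚ) < N := by exact_mod_cast hN
  have h' : (totalRank pref α : ℚ) ≤ totalRank pref β := by
    have := mul_le_mul_of_nonneg_right hmin hNQ.le
    rwa [div_mul_cancel₀ _ hNQ.ne', div_mul_cancel₀ _ hNQ.ne'] at this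
  have h'' : totalRank pref α ≤ totalRank pref β := by exact_mod_cast h'
  omega

/-- part (i) of non-obvious manipulability: for every agent,
truthful reporting weakly optimizes the worst-case true rank, over all
counterpart profiles and all allocations in the mechanism's output set. -/
theorem rm_truth_weakly_optimizes_worst_case {N M : ℕ} (q : Fin M → ℕ)
    (hq : N ≤ ∑ o, q o) (hq1 : ∀ o, 1 ≤ q o)
    (i : Fin N) (p p' : Pref M) (hne : p' ≠ p) :
    worstCase q i p p ≤ worstCase q i p p' := by
  classical
  clear hne hq1
  have hN : 0 < N := i.pos
  have hEx : ∃ k, N ≤ topCap q p k := by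
    refine ⟨M, ?_⟩
    unfold topCap
    rw [Finset.filter_true_of_mem (fun o _ => (p o).isLt)]
    exact hq
  set k := Nat.find hEx with hk
  have hkspec : N ≤ topCap q p k := Nat.find_spec hEx
  have hkpos : 0 < k := by
    rcases Nat.eq_zero_or_pos k with h0 | h
    · exfalso
      have h1 := hkspec
      rw [h0] at h1
      unfold topCap at h1
      simp at h1
      omega
    · exact h
  have hkmin : topCap q p (k - 1) < N := by
    have := Nat.find_min hEx (m := k - 1) (by omega)
    omega
  -- upper bound for truthful reporting
  have hub : worstCase q i p p ≤ k := by
    apply csSup_le'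
    rintro r ⟨pref, hpi, α, hαRM, rfl⟩
    exact rank_mem_RM_le q i p k hkspec pref hpi α hαRM
  -- lower bound for the misreport: everyone reports p'
  set pref' : Fin N → Pref M := fun _ => p' with hpref'
  obtain ⟨α, hαRM⟩ := exists_RM q hq pref'
  have hj : ∃ j : Fin N, k ≤ rank p (α j) := by
    by_contra hall
    push_neg at hall
    have hmem' : ∀ j, α j ∈ univ.filter (fun o : Fin M => (p o : ℕ) < k - 1) := by
      intro j
      simp only [mem_filter, mem_univ, true_and]
      have := hall j
      unfold rank at this
      omega
    have h2 := Finset.card_eq_sum_card_fiberwise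
      (f := α) (s := (univ : Finset (Fin N)))
      (t := univ.filter (fun o : Fin M => (p o : ℕ) < k - 1)) (fun j _ => hmem' j)
    have h3 : ∑ o ∈ univ.filter (fun o : Fin M => (p o : ℕ) < k - 1),
        (univ.filter fun j => α j = o).card ≤ topCap q p (k - 1) :=
      Finset.sum_le_sum (fun o _ => hαRM.1 o)
    rw [Finset.card_univ, Fintype.card_fin] at h2
    omega
  obtain ⟨j, hjk⟩ := hj
  set α' : Fin N → Fin M := fun t => α (Equiv.swap i j t) with hα'
  have hα'alloc : IsAlloc q α' := by
    intro o
    have hcard : (univ.filter fun t => α' t = o).card = (univ.filter fun t => α t = o).card := by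
      apply Finset.card_bij (fun t _ => Equiv.swap i j t)
      · intro t ht
        simp only [mem_filter, mem_univ, true_and] at ht ⊢
        exact ht
      · intro a _ b _ h
        exact (Equiv.swap i j).injective h
      · intro y hy
        refine ⟨Equiv.swap i j y, ?_, by simp⟩
        simp only [mem_filter, mem_univ, true_and, hα'] at hy ⊢
        simpa using hy
    rw [hcard]
    exact hαRM.1 o
  have htot : totalRank pref' α' = totalRank pref' α := by
    unfold totalRank
    simp only [hpref', hα']
    exact Equiv.sum_comp (Equiv.swap i j) (fun t => rank p' (α t))
  have hα'RM : α' ∈ RM q pref' := by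
    refine ⟨hα'alloc, fun β hβ => ?_⟩
    show (totalRank pref' α' : ℚ) / N ≤ avgRank pref' β
    rw [htot]
    exact hαRM.2 β hβ
  have hbdd : BddAbove {r | ∃ pref : Fin N → Pref M, pref i = p' ∧
      ∃ α ∈ RM q pref, r = rank p (α i)} := by
    refine ⟨M, ?_⟩
    rintro r ⟨pref, _, β, _, rfl⟩
    exact rank_le_M p (β i)
  have hlb : k ≤ worstCase q i p p' := by
    have h1 : rank p (α' i) ≤ worstCase q i p p' := by
      unfold worstCase
      exact le_csSup hbdd ⟨pref', rfl, α', hα'RM, rfl⟩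
    have h2 : k ≤ rank p (α' i) := by
      have hiji : α' i = α j := by simp [hα']
      rw [hiji]
      exact hjk
    omega
  omega
end
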